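/- Let d and δ be two linear endomorphisms of a finite-dimensional vector space with d² = 0 and δ² = 0, which are disjoint in the sense that ker(δ) ∩ im(d) = {0} and ker(d) ∩ im(δ) = {0}. Set □ = dδ + δd. Then the space decomposes as the direct sum im(δ) ⊕ ker(□) ⊕ im(d), with im(δ) ⊕ ker(□) = ker(δ) and ker(□) ⊕ im(d) = ker(d). -/

import Mathlib

/-!
On `ker d ⊓ ker δ` the operator `□ = dδ + δd` vanishes, and disjointness forces the converse:
from `□x = 0`, applying `d` puts `δdx` in `ker d ⊓ range δ`, after which `dδx`, `δx` and `dx`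
vanish in turn. The same disjointness makes `ker □` and `range d ⊔ range δ` independent, and
since `range □ ≤ range d ⊔ range δ`, rank–nullity shows that they are complementary. The
descriptions of `ker δ` and `ker d` then follow from the modular law.
-/

namespace LinearMap

theorem isCompl_ker_of_range_le {K V : Type*} [Field K] [AddCommGroup V] [Module K V]
    [FiniteDimensional K V] {f : V →ₗ[K] V} {W : Submodule K V} (hW : range f ≤ W)
    (h : Disjoint (ker f) W) : IsCompl (ker f) W := by
  refine (Submodule.isCompl_iff_disjoint _ _ ?_).mpr h
  rw [← finrank_range_add_finrank_ker f, add_comm]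
  gcongr
  exact Submodule.finrank_mono hW

variable {R M : Type*} [Semiring R] [AddCommMonoid M] [Module R M] {d δ : M →ₗ[R] M}

theorem ker_comp_add_comp_eq (hd : d ∘ₗ d = 0) (disj1 : ker δ ⊓ range d = ⊥)
    (disj2 : ker d ⊓ range δ = ⊥) : ker (d ∘ₗ δ + δ ∘ₗ d) = ker d ⊓ ker δ := by
  have mem_disj1 {y} (hy : δ y = 0) (hyd : y ∈ range d) : y = 0 :=
    (Submodule.mem_bot R).mp (disj1 ▸ ⟨hy, hyd⟩)
  have mem_disj2 {y} (hy : d y = 0) (hyδ : y ∈ range δ) : y = 0 :=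
    (Submodule.mem_bot R).mp (disj2 ▸ ⟨hy, hyδ⟩)
  refine le_antisymm (fun x hx => ?_) fun x ⟨hdx, hδx⟩ => by simp_all
  have hx : d (δ x) + δ (d x) = 0 := hx
  have hdd (y : M) : d (d y) = 0 := by simpa using LinearMap.congr_fun hd y
  have hδdx : δ (d x) = 0 := mem_disj2 (by simpa [hdd] using congrArg d hx) ⟨d x, rfl⟩
  have hdδx : d (δ x) = 0 := by simpa [hδdx] using hx
  exact ⟨mem_disj1 hδdx ⟨x, rfl⟩, mem_disj2 hdδx ⟨x, rfl⟩⟩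

theorem disjoint_ker_inf_ker_range_sup_range (hδ : δ ∘ₗ δ = 0) (disj1 : ker δ ⊓ range d = ⊥)
    (disj2 : ker d ⊓ range δ = ⊥) : Disjoint (ker d ⊓ ker δ) (range d ⊔ range δ) := by
  rw [Submodule.disjoint_def]
  rintro _ ⟨hdx, hδx⟩ hx
  obtain ⟨y, hy, z, hz, rfl⟩ := Submodule.mem_sup.mp hx
  have hδz : δ z = 0 := range_le_ker_iff.mpr hδ hz
  have hy0 : y = 0 := (Submodule.mem_bot R).mp (disj1 ▸ ⟨by simpa [hδz] using hδx, hy⟩)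
  subst hy0
  rw [zero_add] at hdx ⊢
  exact (Submodule.mem_bot R).mp (disj2 ▸ ⟨hdx, hz⟩)

theorem range_comp_add_comp_le : range (d ∘ₗ δ + δ ∘ₗ d) ≤ range d ⊔ range δ :=
  (range_add_le _ _).trans (sup_le_sup (range_comp_le_range _ _) (range_comp_le_range _ _))

end LinearMap

open LinearMap

/-- Hodge decomposition for a pair of disjoint differentials on a
finite-dimensional vector space. -/
theorem hodge_decomposition
    (K : Type*) [Field K]
    (C : Type*) [AddCommGroup C] [Module K C] [FiniteDimensional K C]
    (d δ : C →ₗ[K] C)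
    (hd : d ∘ₗ d = 0) (hδ : δ ∘ₗ δ = 0)
    (disj1 : LinearMap.ker δ ⊓ LinearMap.range d = ⊥)
    (disj2 : LinearMap.ker d ⊓ LinearMap.range δ = ⊥) :
    (LinearMap.range δ ⊓ LinearMap.ker (d ∘ₗ δ + δ ∘ₗ d) = ⊥) ∧
    ((LinearMap.range δ ⊔ LinearMap.ker (d ∘ₗ δ + δ ∘ₗ d)) ⊓ LinearMap.range d = ⊥) ∧
    (LinearMap.range δ ⊔ LinearMap.ker (d ∘ₗ δ + δ ∘ₗ d) ⊔ LinearMap.range d = ⊤) ∧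
    (LinearMap.range δ ⊔ LinearMap.ker (d ∘ₗ δ + δ ∘ₗ d) = LinearMap.ker δ) ∧
    (LinearMap.ker (d ∘ₗ δ + δ ∘ₗ d) ⊔ LinearMap.range d = LinearMap.ker d) := by
  have hker := ker_comp_add_comp_eq hd disj1 disj2
  have hcompl : IsCompl (ker (d ∘ₗ δ + δ ∘ₗ d)) (range d ⊔ range δ) :=
    isCompl_ker_of_range_le range_comp_add_comp_le
      (hker ▸ disjoint_ker_inf_ker_range_sup_range hδ disj1 disj2)
  have htop : range δ ⊔ ker (d ∘ₗ δ + δ ∘ₗ d) ⊔ range d = ⊤ := by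
    rw [← hcompl.sup_eq_top]; ac_rfl
  have hkerδ : range δ ⊔ ker (d ∘ₗ δ + δ ∘ₗ d) = ker δ :=
    eq_of_le_of_inf_le_of_le_sup (sup_le (range_le_ker_iff.mpr hδ) (hker ▸ inf_le_right))
      (disj1.trans_le bot_le) (htop ▸ le_top)
  have hkerd : ker (d ∘ₗ δ + δ ∘ₗ d) ⊔ range d = ker d :=
    eq_of_le_of_inf_le_of_le_sup (sup_le (hker ▸ inf_le_left) (range_le_ker_iff.mpr hd))
      (disj2.trans_le bot_le) (by rw [sup_assoc, hcompl.sup_eq_top]; exact le_top)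
  refine ⟨?_, hkerδ ▸ disj1, htop, hkerδ, hkerd⟩
  rw [eq_bot_iff, ← disj2, inf_comm]
  exact inf_le_inf_right _ (hker ▸ inf_le_left)
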